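/- arXiv:2011.08174 — 6 statements merged into one kernel-verified Lean document; each statement's English description precedes it below -/
import Mathlib

section
/- Let p ≥ 1 be an integer, B₁ < B₂ reals, B = [B₁,B₂]^p ⊆ ℝ^p, and let W : ℝ^p → ℝ be differentiable and σ-strongly concave on B with σ > 0. Assume sup_{β∈B} max_{1≤i≤p} |∂W/∂β_i(β)| ≤ G, and let β* ∈ B be a maximizer of W over B. Fix constants M ≥ η ≥ 1/σ and define the projected gradient ascent iterates by β₁ ∈ B arbitrary and β_{w+1} = P(β_w + (η/(w+1)) ∇W(β_w)) for w ≥ 1, where P is the coordinatewise projection onto the box B. Set L = max{2(B₂−B₁)², G² M²}. Then for every integer w ≥ 1, ‖β_w − β*‖² ≤ L p / w, where ‖·‖ is the Euclidean norm. -/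
/-! Strong concavity and the first-order optimality of `β*` on the box give
`⟪∇W x, x - β*⟫ ≤ -σ ‖x - β*‖²`, and the coordinatewise projection moves no point farther from
`β*`. So a step of size `s = η/(w+1)` multiplies the squared distance by `1 - 2σs ≤ 1 - 2/(w+1)`
up to a noise term `s² p G² ≤ L p/(w+1)²`, and the recursion
`d (w+1) ≤ (1 - 2/(w+1)) d w + K/(w+1)²`, `d 1 ≤ K`, forces `d w ≤ K/w`. -/

open Real

/-- The box `[B₁, B₂]^p` in `ℝ^p`. -/
def box (p : ℕ) (B₁ B₂ : ℝ) : Set (EuclideanSpace ℝ (Fin p)) :=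
  {x | ∀ i, x i ∈ Set.Icc B₁ B₂}

/-- Coordinatewise projection onto the box `[B₁, B₂]^p`: `(P x) i = min B₂ (max B₁ (x i))`. -/
noncomputable def boxProj (p : ℕ) (B₁ B₂ : ℝ) (x : EuclideanSpace ℝ (Fin p)) :
    EuclideanSpace ℝ (Fin p) :=
  (WithLp.equiv 2 (Fin p → ℝ)).symm fun i => min B₂ (max B₁ (x i))

/-- `W` is `σ`-strongly concave on `S`. -/
def PaperStrongConcaveOn {p : ℕ} (S : Set (EuclideanSpace ℝ (Fin p))) (σ : ℝ)
    (W : EuclideanSpace ℝ (Fin p) → ℝ) : Prop :=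
  ∀ x ∈ S, ∀ y ∈ S, ∀ t ∈ Set.Icc (0 : ℝ) 1,
    t * W x + (1 - t) * W y + σ / 2 * t * (1 - t) * ‖x - y‖ ^ 2 ≤ W (t • x + (1 - t) • y)

open Set

section Calculus

variable {E : Type*} [NormedAddCommGroup E] [InnerProductSpace ℝ E] [CompleteSpace E]

lemma hasDerivAt_comp_line_gradient {W : E → ℝ} {x : E} (hW : DifferentiableAt ℝ W x) (v : E) :
    HasDerivAt (fun t : ℝ => W (x + t • v)) (inner ℝ (gradient W x) v) 0 := by
  have h := hW.hasGradientAt.hasFDerivAt.hasLineDerivAt v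
  rwa [InnerProductSpace.toDual_apply_apply] at h

lemma HasDerivAt.nonneg_of_forall_Ioc_le {φ : ℝ → ℝ} {d : ℝ} (hφ : HasDerivAt φ d 0)
    (hmin : ∀ t ∈ Ioc (0 : ℝ) 1, φ 0 ≤ φ t) : 0 ≤ d := by
  refine ge_of_tendsto ((hasDerivAt_iff_tendsto_slope.mp hφ).mono_left (nhdsGT_le_nhdsNE 0)) ?_
  filter_upwards [Ioc_mem_nhdsGT one_pos] with t ht
  rw [slope_def_field]
  exact div_nonneg (sub_nonneg.mpr (hmin t ht)) (by linarith [ht.1])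

lemma HasDerivAt.le_of_forall_Ioc_le {f : ℝ → ℝ} {d a b : ℝ} (hf : HasDerivAt f d 0)
    (h : ∀ t ∈ Ioc (0 : ℝ) 1, t * a - t ^ 2 * b ≤ f t - f 0) : a ≤ d := by
  have hφ : HasDerivAt (fun t => f t - t * a + t ^ 2 * b) (d - a + ((2 : ℕ) : ℝ) * 0 ^ 1 * b) 0 :=
    (hf.sub (hasDerivAt_mul_const a)).add ((hasDerivAt_pow 2 0).mul_const b)
  rw [zero_pow one_ne_zero, mul_zero, zero_mul, add_zero] at hφ
  have := hφ.nonneg_of_forall_Ioc_le fun t ht => by linarith [h t ht]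
  linarith

lemma IsMaxOn.inner_gradient_nonpos {W : E → ℝ} {S : Set E} {x y : E} (hS : Convex ℝ S)
    (hW : DifferentiableAt ℝ W x) (hmax : IsMaxOn W S x) (hx : x ∈ S) (hy : y ∈ S) :
    inner ℝ (gradient W x) (y - x) ≤ 0 := by
  have h := (hmax.localize.on_subset subset_rfl).hasFDerivWithinAt_nonpos
    hW.hasGradientAt.hasFDerivAt.hasFDerivWithinAt
    (sub_mem_posTangentConeAt_of_segment_subset (hS.segment_subset hx hy))
  rwa [InnerProductSpace.toDual_apply_apply] at h

end Calculus

section Box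

variable {p : ℕ} {B₁ B₂ : ℝ}

lemma norm_sq_le_of_forall_abs_le {ι : Type*} [Fintype ι] {x : EuclideanSpace ℝ ι} {C : ℝ}
    (h : ∀ i, |x i| ≤ C) : ‖x‖ ^ 2 ≤ Fintype.card ι * C ^ 2 := by
  rw [EuclideanSpace.norm_sq_eq, ← nsmul_eq_mul, ← Finset.card_univ, ← Finset.sum_const]
  exact Finset.sum_le_sum fun i _ => by
    rw [Real.norm_eq_abs]; exact pow_le_pow_left₀ (abs_nonneg _) (h i) 2

lemma convex_box : Convex ℝ (box p B₁ B₂) :=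
  fun _ hx _ hy _ _ ha hb hab i => convex_Icc B₁ B₂ (hx i) (hy i) ha hb hab

lemma abs_sub_le_of_mem_box {x y : EuclideanSpace ℝ (Fin p)} (hx : x ∈ box p B₁ B₂)
    (hy : y ∈ box p B₁ B₂) (i : Fin p) : |(x - y) i| ≤ B₂ - B₁ := by
  rw [PiLp.sub_apply, abs_sub_le_iff]
  constructor <;> linarith [(hx i).1, (hx i).2, (hy i).1, (hy i).2]

@[simp]
lemma boxProj_apply (x : EuclideanSpace ℝ (Fin p)) (i : Fin p) :
    boxProj p B₁ B₂ x i = min B₂ (max B₁ (x i)) :=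
  rfl

lemma boxProj_mem (hB : B₁ ≤ B₂) (x : EuclideanSpace ℝ (Fin p)) :
    boxProj p B₁ B₂ x ∈ box p B₁ B₂ := fun i => by
  rw [boxProj_apply]
  exact ⟨le_min hB (le_max_left _ _), min_le_left _ _⟩

lemma sq_min_max_sub_le {a c : ℝ} (hc : c ∈ Icc B₁ B₂) :
    (min B₂ (max B₁ a) - c) ^ 2 ≤ (a - c) ^ 2 := by
  obtain ⟨h₁, h₂⟩ := hc
  rcases le_total a B₁ with ha | ha
  · rw [max_eq_left ha, min_eq_right (h₁.trans h₂)]; nlinarith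
  · rw [max_eq_right ha]
    rcases le_total a B₂ with ha' | ha'
    · rw [min_eq_right ha']
    · rw [min_eq_left ha']; nlinarith

lemma norm_boxProj_sub_sq_le (x : EuclideanSpace ℝ (Fin p)) {z : EuclideanSpace ℝ (Fin p)}
    (hz : z ∈ box p B₁ B₂) : ‖boxProj p B₁ B₂ x - z‖ ^ 2 ≤ ‖x - z‖ ^ 2 := by
  simp only [EuclideanSpace.norm_sq_eq, PiLp.sub_apply, boxProj_apply, Real.norm_eq_abs, sq_abs]
  exact Finset.sum_le_sum fun i _ => sq_min_max_sub_le (hz i)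

end Box

section StrongConcavity

variable {p : ℕ} {S : Set (EuclideanSpace ℝ (Fin p))} {σ : ℝ} {W : EuclideanSpace ℝ (Fin p) → ℝ}

lemma PaperStrongConcaveOn.le_inner_gradient (hconc : PaperStrongConcaveOn S σ W)
    (hW : Differentiable ℝ W) {x y : EuclideanSpace ℝ (Fin p)} (hx : x ∈ S) (hy : y ∈ S) :
    W y - W x + σ / 2 * ‖y - x‖ ^ 2 ≤ inner ℝ (gradient W x) (y - x) := by
  refine (hasDerivAt_comp_line_gradient (hW x) (y - x)).le_of_forall_Ioc_le
    (b := σ / 2 * ‖y - x‖ ^ 2) fun t ht => ?_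
  have hline : t • y + (1 - t) • x = x + t • (y - x) := by
    rw [smul_sub, sub_smul, one_smul]; abel
  have h := hconc y hy x hx t (Ioc_subset_Icc_self ht)
  rw [hline] at h
  simp only [zero_smul, add_zero]
  nlinarith

lemma PaperStrongConcaveOn.inner_gradient_sub_le (hconc : PaperStrongConcaveOn S σ W)
    (hS : Convex ℝ S) (hW : Differentiable ℝ W) {x βstar : EuclideanSpace ℝ (Fin p)}
    (hx : x ∈ S) (hβstar : βstar ∈ S) (hmax : IsMaxOn W S βstar) :
    inner ℝ (gradient W x) (x - βstar) ≤ -σ * ‖x - βstar‖ ^ 2 := by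
  have h₁ := hconc.le_inner_gradient hW hx hβstar
  have h₂ := hconc.le_inner_gradient hW hβstar hx
  have hopt := hmax.inner_gradient_nonpos hS (hW βstar) hβstar hx
  rw [← neg_sub x βstar, inner_neg_right, norm_neg] at h₁
  linarith

end StrongConcavity

lemma norm_boxProj_gradient_step_sub_sq_le {p : ℕ} {B₁ B₂ σ s : ℝ}
    {W : EuclideanSpace ℝ (Fin p) → ℝ} (hconc : PaperStrongConcaveOn (box p B₁ B₂) σ W)
    (hW : Differentiable ℝ W) {x βstar : EuclideanSpace ℝ (Fin p)} (hx : x ∈ box p B₁ B₂)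
    (hβstar : βstar ∈ box p B₁ B₂) (hmax : IsMaxOn W (box p B₁ B₂) βstar) (hs : 0 ≤ s)
    {G : ℝ} (hG : ∀ i, |gradient W x i| ≤ G) :
    ‖boxProj p B₁ B₂ (x + s • gradient W x) - βstar‖ ^ 2 ≤
      (1 - 2 * σ * s) * ‖x - βstar‖ ^ 2 + s ^ 2 * (p * G ^ 2) := by
  have hmono := hconc.inner_gradient_sub_le convex_box hW hx hβstar hmax
  have hgrad : ‖gradient W x‖ ^ 2 ≤ p * G ^ 2 := by
    simpa using norm_sq_le_of_forall_abs_le hG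
  calc ‖boxProj p B₁ B₂ (x + s • gradient W x) - βstar‖ ^ 2
      ≤ ‖(x - βstar) + s • gradient W x‖ ^ 2 := by
        rw [← add_sub_right_comm]; exact norm_boxProj_sub_sq_le _ hβstar
    _ = ‖x - βstar‖ ^ 2 + 2 * s * inner ℝ (gradient W x) (x - βstar)
          + s ^ 2 * ‖gradient W x‖ ^ 2 := by
        rw [norm_add_sq_real, inner_smul_right, real_inner_comm, norm_smul, mul_pow,
          Real.norm_eq_abs, sq_abs]
        ring
    _ ≤ (1 - 2 * σ * s) * ‖x - βstar‖ ^ 2 + s ^ 2 * (p * G ^ 2) := by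
        nlinarith [mul_le_mul_of_nonneg_left hgrad (sq_nonneg s)]

lemma le_div_of_le_one_sub_two_div_mul_add {d : ℕ → ℝ} {K : ℝ} (hK : 0 ≤ K) (h₁ : d 1 ≤ K)
    (hstep : ∀ w ≥ 1, d (w + 1) ≤ (1 - 2 / (w + 1)) * d w + K / (w + 1) ^ 2) :
    ∀ w ≥ 1, d w ≤ K / w := by
  intro w hw
  induction w, hw using Nat.le_induction with
  | base => simpa using h₁
  | succ w hw ih =>
    have hw' : (1 : ℝ) ≤ w := by exact_mod_cast hw
    calc d (w + 1) ≤ (1 - 2 / (w + 1)) * d w + K / (w + 1) ^ 2 := hstep w hw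
      _ ≤ (1 - 2 / (w + 1)) * (K / w) + K / (w + 1) ^ 2 := by
          have : 2 / ((w : ℝ) + 1) ≤ 1 := by rw [div_le_one (by positivity)]; linarith
          gcongr
      _ = K / (w + 1) - K / (w * (w + 1) ^ 2) := by
          field_simp
          ring
      _ ≤ K / ((w + 1 : ℕ) : ℝ) := by
          push_cast
          exact sub_le_self _ (by positivity)

theorem stmt1_general (p : ℕ) (B₁ B₂ : ℝ) (hB : B₁ < B₂)
    (σ G M η : ℝ) (hσ : 0 < σ) (hησ : 1 / σ ≤ η) (hηM : η ≤ M)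
    (W : EuclideanSpace ℝ (Fin p) → ℝ)
    (hdiff : Differentiable ℝ W)
    (hconc : PaperStrongConcaveOn (box p B₁ B₂) σ W)
    (hG : ∀ x ∈ box p B₁ B₂, ∀ i, |gradient W x i| ≤ G)
    (βstar : EuclideanSpace ℝ (Fin p)) (hβstar : βstar ∈ box p B₁ B₂)
    (hmax : ∀ b ∈ box p B₁ B₂, W b ≤ W βstar)
    (β : ℕ → EuclideanSpace ℝ (Fin p)) (hβ1 : β 1 ∈ box p B₁ B₂)
    (hrec : ∀ w : ℕ, 1 ≤ w →
      β (w + 1) = boxProj p B₁ B₂ (β w + (η / ((w : ℝ) + 1)) • gradient W (β w))) :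
    ∀ w : ℕ, 1 ≤ w →
      ‖β w - βstar‖ ^ 2 ≤ max (2 * (B₂ - B₁) ^ 2) (G ^ 2 * M ^ 2) * p / w := by
  set L := max (2 * (B₂ - B₁) ^ 2) (G ^ 2 * M ^ 2)
  have hmem : ∀ w ≥ 1, β w ∈ box p B₁ B₂ := fun w hw => by
    induction w, hw using Nat.le_induction with
    | base => exact hβ1
    | succ w hw _ => exact hrec w hw ▸ boxProj_mem hB.le _
  have hη : 0 < η := (one_div_pos.mpr hσ).trans_le hησ
  refine le_div_of_le_one_sub_two_div_mul_add (by positivity) ?_ fun w hw => ?_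
  · calc ‖β 1 - βstar‖ ^ 2 ≤ p * (B₂ - B₁) ^ 2 := by
          simpa using norm_sq_le_of_forall_abs_le (abs_sub_le_of_mem_box hβ1 hβstar)
      _ ≤ L * p := by nlinarith [le_max_left (2 * (B₂ - B₁) ^ 2) (G ^ 2 * M ^ 2)]
  · set c : ℝ := w + 1
    have hc : 0 < c := by positivity
    have hrate : 2 / c ≤ 2 * σ * (η / c) := by
      rw [mul_div_assoc', div_le_div_iff_of_pos_right hc]
      linarith [(div_le_iff₀' hσ).mp hησ]
    have hnoise : (η / c) ^ 2 * (p * G ^ 2) ≤ L * p / c ^ 2 := by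
      rw [div_pow, div_mul_eq_mul_div, div_le_div_iff_of_pos_right (by positivity)]
      nlinarith [le_max_right (2 * (B₂ - B₁) ^ 2) (G ^ 2 * M ^ 2),
        pow_le_pow_left₀ hη.le hηM 2, mul_nonneg (Nat.cast_nonneg p) (sq_nonneg G)]
    calc ‖β (w + 1) - βstar‖ ^ 2
        ≤ (1 - 2 * σ * (η / c)) * ‖β w - βstar‖ ^ 2 + (η / c) ^ 2 * (p * G ^ 2) := by
          rw [hrec w hw]
          exact norm_boxProj_gradient_step_sub_sq_le hconc hdiff (hmem w hw) hβstar hmax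
            (by positivity) (hG _ (hmem w hw))
      _ ≤ (1 - 2 / c) * ‖β w - βstar‖ ^ 2 + L * p / c ^ 2 := add_le_add (by gcongr) hnoise

/-- **Projected gradient ascent under strong concavity (Lemma C.4).**
For a differentiable `σ`-strongly concave `W` on the box with partial derivatives bounded by `G`,
maximizer `β*`, learning rate `η/(w+1)` with `M ≥ η ≥ 1/σ`, the projected gradient ascent
iterates satisfy `‖β_w - β*‖² ≤ L p / w` with `L = max (2(B₂-B₁)²) (G²M²)`. -/
theorem stmt1 (p : ℕ) (hp : 1 ≤ p) (B₁ B₂ : ℝ) (hB : B₁ < B₂)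
    (σ G M η : ℝ) (hσ : 0 < σ) (hησ : 1 / σ ≤ η) (hηM : η ≤ M)
    (W : EuclideanSpace ℝ (Fin p) → ℝ)
    (hdiff : Differentiable ℝ W)
    (hconc : PaperStrongConcaveOn (box p B₁ B₂) σ W)
    (hG : ∀ x ∈ box p B₁ B₂, ∀ i, |gradient W x i| ≤ G)
    (βstar : EuclideanSpace ℝ (Fin p)) (hβstar : βstar ∈ box p B₁ B₂)
    (hmax : ∀ b ∈ box p B₁ B₂, W b ≤ W βstar)
    (β : ℕ → EuclideanSpace ℝ (Fin p)) (hβ1 : β 1 ∈ box p B₁ B₂)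
    (hrec : ∀ w : ℕ, 1 ≤ w →
      β (w + 1) = boxProj p B₁ B₂ (β w + (η / ((w : ℝ) + 1)) • gradient W (β w))) :
    ∀ w : ℕ, 1 ≤ w →
      ‖β w - βstar‖ ^ 2 ≤ max (2 * (B₂ - B₁) ^ 2) (G ^ 2 * M ^ 2) * p / w :=
  stmt1_general p B₁ B₂ hB σ G M η hσ hησ hηM W hdiff hconc hG βstar hβstar hmax β hβ1 hrec
end

section
/- Let W : ℝ^p → ℝ be differentiable and satisfy the quasi-concavity condition. Suppose there exist β* ∈ ℝ^p, a set S ⊆ ℝ^p, and constants 0 < λ_min ≤ λ_max such that −λ_max‖β − β*‖² ≤ W(β) − W(β*) ≤ −λ_min‖β − β*‖² for all β ∈ S, and set κ = λ_max/λ_min. Let ε > 0 and β ∈ S satisfy ‖β − β*‖² > κ·ε and ∇W(β) ≠ 0, and assume that the point β̃ := β* − √ε · ∇W(β)/‖∇W(β)‖ lies in S. Then ⟨∇W(β), β* − β⟩ ≥ √ε · ‖∇W(β)‖, where ⟨·,·⟩ and ‖·‖ are the Euclidean inner product and norm. -/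
open scoped RealInnerProductSpace

/-- **Gradient progress away from the optimum for quasi-concave objectives
(proof of Lemma C.8, Equation C.10).**
If `W` is quasi-concave, satisfies the two-sided quadratic sandwich around `β*` on `S` with
constants `0 < λ_min ≤ λ_max`, `κ = λ_max/λ_min`, and `β ∈ S` is far from the optimum in the
sense `‖β - β*‖² > κ ε` with nonzero gradient, and the auxiliary point
`β̃ = β* - √ε ∇W(β)/‖∇W(β)‖` lies in `S`, then `⟨∇W(β), β* - β⟩ ≥ √ε ‖∇W(β)‖`. -/
theorem stmt6 (p : ℕ) (W : EuclideanSpace ℝ (Fin p) → ℝ)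
    (hdiff : Differentiable ℝ W)
    (hqc : ∀ b b' : EuclideanSpace ℝ (Fin p), W b ≤ W b' → 0 ≤ ⟪gradient W b, b' - b⟫)
    (βstar : EuclideanSpace ℝ (Fin p)) (S : Set (EuclideanSpace ℝ (Fin p)))
    (lmin lmax : ℝ) (hlmin : 0 < lmin) (hl : lmin ≤ lmax)
    (hsand : ∀ b ∈ S, -lmax * ‖b - βstar‖ ^ 2 ≤ W b - W βstar ∧
      W b - W βstar ≤ -lmin * ‖b - βstar‖ ^ 2)
    (ε : ℝ) (hε : 0 < ε) (β : EuclideanSpace ℝ (Fin p)) (hβ : β ∈ S)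
    (hfar : lmax / lmin * ε < ‖β - βstar‖ ^ 2)
    (hg : gradient W β ≠ 0)
    (htilde : βstar - (Real.sqrt ε / ‖gradient W β‖) • gradient W β ∈ S) :
    Real.sqrt ε * ‖gradient W β‖ ≤ ⟪gradient W β, βstar - β⟫ := by
  set g := gradient W β with hgdef
  set βt := βstar - (Real.sqrt ε / ‖g‖) • g with hbt
  have hgn : (0:ℝ) < ‖g‖ := norm_pos_iff.mpr hg
  have hnorm : ‖βt - βstar‖ ^ 2 = ε := by
    have h1 : βt - βstar = -((Real.sqrt ε / ‖g‖) • g) := by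
      rw [hbt]; abel
    rw [h1, norm_neg, norm_smul, Real.norm_eq_abs,
      abs_of_nonneg (div_nonneg (Real.sqrt_nonneg ε) hgn.le)]
    rw [div_mul_cancel₀ _ hgn.ne', Real.sq_sqrt hε.le]
  have hWt := (hsand βt htilde).1
  have hWβ := (hsand β hβ).2
  have hle : W β ≤ W βt := by
    have h1 : W β - W βstar ≤ -lmin * (lmax / lmin * ε) := by
      calc W β - W βstar ≤ -lmin * ‖β - βstar‖ ^ 2 := hWβ
        _ ≤ -lmin * (lmax / lmin * ε) := by nlinarith
    have h2 : -lmin * (lmax / lmin * ε) = -lmax * ε := by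
      field_simp
    rw [hnorm] at hWt
    linarith [h1, h2 ▸ h1]
  have hq := hqc β βt hle
  have hinner : ⟪g, βt - β⟫ = ⟪g, βstar - β⟫ - Real.sqrt ε * ‖g‖ := by
    have : βt - β = (βstar - β) - (Real.sqrt ε / ‖g‖) • g := by rw [hbt]; abel
    rw [this, inner_sub_right, real_inner_smul_right, real_inner_self_eq_norm_sq]
    field_simp
  rw [hinner] at hq
  linarith
end

section
/- Let B ⊆ ℝ^p be a nonempty closed convex set with metric (Euclidean) projection P_B, let β*, β ∈ B, let g ∈ ℝ^p be nonzero, let ε > 0, and let J ∈ (0,1]. If ⟨g, β* − β⟩ ≥ √ε · ‖g‖, then the updated point β⁺ := P_B(β + (J√ε/‖g‖)·g) satisfies ‖β⁺ − β*‖² ≤ ‖β − β*‖² − J·ε, where ⟨·,·⟩ and ‖·‖ are the Euclidean inner product and norm. -/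
open scoped RealInnerProductSpace

/-!
Projecting onto a convex set does not increase the distance to any point of the set, so it
suffices to bound the distance from `β*` to the unprojected point `β + η g`, `η = J √ε / ‖g‖`.
The step has length `J √ε`; since `g` makes progress `√ε` towards `β*`, it gains at least `2 J ε`
in squared distance while costing `J² ε ≤ J ε`.
-/

section Projection

variable {F : Type*} [NormedAddCommGroup F] [InnerProductSpace ℝ F]

theorem Convex.real_inner_sub_le_zero_of_forall_norm_sub_le {K : Set F} (hK : Convex ℝ K)
    {u v w : F} (hv : v ∈ K) (hmin : ∀ x ∈ K, ‖v - u‖ ≤ ‖x - u‖) (hw : w ∈ K) :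
    ⟪u - v, w - v⟫ ≤ 0 := by
  have : Nonempty K := ⟨⟨v, hv⟩⟩
  refine (norm_eq_iInf_iff_real_inner_le_zero hK hv).mp ?_ w hw
  have hbdd : BddBelow (Set.range fun x : K => ‖u - x‖) :=
    ⟨0, by rintro _ ⟨x, rfl⟩; exact norm_nonneg _⟩
  refine le_antisymm (le_ciInf fun x => ?_) (ciInf_le hbdd ⟨v, hv⟩)
  simpa only [norm_sub_rev u] using hmin x x.2

theorem Convex.norm_sub_le_of_forall_norm_sub_le {K : Set F} (hK : Convex ℝ K)
    {u v w : F} (hv : v ∈ K) (hmin : ∀ x ∈ K, ‖v - u‖ ≤ ‖x - u‖) (hw : w ∈ K) :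
    ‖v - w‖ ≤ ‖u - w‖ := by
  have hVI := hK.real_inner_sub_le_zero_of_forall_norm_sub_le hv hmin hw
  have hsplit : ‖u - w‖ ^ 2 = ‖u - v‖ ^ 2 - 2 * ⟪u - v, w - v⟫ + ‖v - w‖ ^ 2 := by
    rw [show u - w = (u - v) + (v - w) by abel, norm_add_sq_real,
      show v - w = -(w - v) by abel, inner_neg_right]
    ring
  refine (pow_le_pow_iff_left₀ (norm_nonneg _) (norm_nonneg _) two_ne_zero).mp ?_
  nlinarith [sq_nonneg ‖u - v‖]

end Projection

theorem norm_add_smul_sub_sq_le {F : Type*} [NormedAddCommGroup F] [InnerProductSpace ℝ F]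
    {x z g : F} (c : ℝ) {a : ℝ} (hc : 0 ≤ c) (hprog : a * ‖g‖ ≤ ⟪g, z - x⟫) :
    ‖x + c • g - z‖ ^ 2 ≤ ‖x - z‖ ^ 2 - 2 * (c * ‖g‖) * a + (c * ‖g‖) ^ 2 := by
  have hexpand : ‖x + c • g - z‖ ^ 2 = ‖x - z‖ ^ 2 - 2 * c * ⟪g, z - x⟫ + (c * ‖g‖) ^ 2 := by
    rw [show x + c • g - z = (x - z) + c • g by abel, norm_add_sq_real, real_inner_smul_right,
      norm_smul, Real.norm_of_nonneg hc, real_inner_comm, show x - z = -(z - x) by abel,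
      inner_neg_right, norm_neg]
    ring
  rw [hexpand]
  nlinarith [mul_le_mul_of_nonneg_left hprog hc]

theorem stmt7_general (p : ℕ) (B : Set (EuclideanSpace ℝ (Fin p)))
    (hBconvex : Convex ℝ B)
    (βstar β : EuclideanSpace ℝ (Fin p)) (hβstar : βstar ∈ B)
    (g : EuclideanSpace ℝ (Fin p)) (hg : g ≠ 0)
    (ε J : ℝ) (hε : 0 < ε) (hJ0 : 0 < J) (hJ1 : J ≤ 1)
    (hprog : Real.sqrt ε * ‖g‖ ≤ ⟪g, βstar - β⟫)
    (βplus : EuclideanSpace ℝ (Fin p)) (hβplusmem : βplus ∈ B)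
    (hproj : ∀ x ∈ B, ‖βplus - (β + (J * Real.sqrt ε / ‖g‖) • g)‖
      ≤ ‖x - (β + (J * Real.sqrt ε / ‖g‖) • g)‖) :
    ‖βplus - βstar‖ ^ 2 ≤ ‖β - βstar‖ ^ 2 - J * ε := by
  have hstep : J * Real.sqrt ε / ‖g‖ * ‖g‖ = J * Real.sqrt ε :=
    div_mul_cancel₀ _ (norm_ne_zero_iff.mpr hg)
  have hcontract := hBconvex.norm_sub_le_of_forall_norm_sub_le hβplusmem hproj hβstar
  have hascent := norm_add_smul_sub_sq_le (J * Real.sqrt ε / ‖g‖) (by positivity) hprog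
  rw [hstep, mul_pow, Real.sq_sqrt hε.le] at hascent
  have hJε : J ^ 2 * ε ≤ J * ε := by nlinarith [mul_le_mul_of_nonneg_left hJ1 hJ0.le]
  nlinarith [pow_le_pow_left₀ (norm_nonneg _) hcontract 2, Real.mul_self_sqrt hε.le]

/-- **One-step contraction for the normalized (gradient-norm-rescaled) projected ascent step
(proof of Lemma C.8).**
Let `B ⊆ ℝ^p` be nonempty, closed and convex, `β*, β ∈ B`, `g ≠ 0`, `ε > 0`, `J ∈ (0,1]`.
If `⟨g, β* - β⟩ ≥ √ε ‖g‖`, then the metric projection `β⁺` of `β + (J√ε/‖g‖) g` onto `B`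
satisfies `‖β⁺ - β*‖² ≤ ‖β - β*‖² - J ε`. Here the metric projection is encoded by the property
that `β⁺ ∈ B` minimizes the distance to the updated point over `B`. -/
theorem stmt7 (p : ℕ) (B : Set (EuclideanSpace ℝ (Fin p)))
    (hBne : B.Nonempty) (hBclosed : IsClosed B) (hBconvex : Convex ℝ B)
    (βstar β : EuclideanSpace ℝ (Fin p)) (hβstar : βstar ∈ B) (hβ : β ∈ B)
    (g : EuclideanSpace ℝ (Fin p)) (hg : g ≠ 0)
    (ε J : ℝ) (hε : 0 < ε) (hJ0 : 0 < J) (hJ1 : J ≤ 1)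
    (hprog : Real.sqrt ε * ‖g‖ ≤ ⟪g, βstar - β⟫)
    (βplus : EuclideanSpace ℝ (Fin p)) (hβplusmem : βplus ∈ B)
    (hproj : ∀ x ∈ B, ‖βplus - (β + (J * Real.sqrt ε / ‖g‖) • g)‖
      ≤ ‖x - (β + (J * Real.sqrt ε / ‖g‖) • g)‖) :
    ‖βplus - βstar‖ ^ 2 ≤ ‖β - βstar‖ ^ 2 - J * ε :=
  stmt7_general p B hBconvex βstar β hβstar g hg ε J hε hJ0 hJ1 hprog βplus hβplusmem hproj
end

section
/- Let B ≥ 1 and E ≥ 0 be reals, and let (P_w)_{w ≥ 1} be a sequence of nonnegative reals with P_1 ≤ E and P_w ≤ (1 + B/w)·P_{w−1} + E/w for all integers w ≥ 2. Then for all integers w ≥ 1, P_w ≤ (π²/6)·e^B·w^B·E. -/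
open Real Finset

/-- **Recursion bound for accumulated errors with decaying learning rate
(proof of Lemma C.7).**
If `P₁ ≤ E` and `P_w ≤ (1 + B/w) P_{w-1} + E/w` for `w ≥ 2`, with `B ≥ 1`, `E ≥ 0` and
`P_w ≥ 0`, then `P_w ≤ (π²/6) e^B w^B E` for all `w ≥ 1`. -/
theorem stmt8 (B E : ℝ) (hB : 1 ≤ B) (hE : 0 ≤ E)
    (P : ℕ → ℝ) (hpos : ∀ w : ℕ, 1 ≤ w → 0 ≤ P w)
    (hP1 : P 1 ≤ E)
    (hrec : ∀ w : ℕ, 2 ≤ w → P w ≤ (1 + B / w) * P (w - 1) + E / w) :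
    ∀ w : ℕ, 1 ≤ w → P w ≤ Real.pi ^ 2 / 6 * Real.exp B * (w : ℝ) ^ B * E := by
  have hexp : (1:ℝ) ≤ Real.exp B := by
    have := Real.add_one_le_exp B; linarith
  set S : ℕ → ℝ := fun w => ∑ k ∈ Finset.range w, 1 / ((k:ℝ)+1)^2 with hS
  have hSle : ∀ w : ℕ, S w ≤ Real.pi ^ 2 / 6 := by
    intro w
    have h' : HasSum (fun n : ℕ => (1:ℝ) / ((n:ℝ)+1) ^ 2) (π ^ 2 / 6) := by
      have := (hasSum_nat_add_iff' (f := fun n : ℕ => (1:ℝ) / (n:ℝ) ^ 2) 1).2 hasSum_zeta_two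
      simpa using this
    exact sum_le_hasSum _ (fun i _ => by positivity) h'
  have hSnn : ∀ w : ℕ, 0 ≤ S w := fun w => Finset.sum_nonneg fun i _ => by positivity
  -- key induction
  have main : ∀ w : ℕ, 1 ≤ w → P w ≤ Real.exp B * (w:ℝ) ^ B * E * S w := by
    intro w hw
    induction w, hw using Nat.le_induction with
    | base =>
      have : S 1 = 1 := by simp [hS]
      rw [this]
      have : ((1:ℕ):ℝ) ^ B = 1 := by simp
      rw [this]
      nlinarith [mul_le_mul_of_nonneg_right hexp hE]
    | succ w hw ih =>
      have hwpos : (0:ℝ) < w := by exact_mod_cast hw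
      have hw1pos : (0:ℝ) < (w:ℝ) + 1 := by linarith
      have hrw := hrec (w+1) (by omega)
      simp only [Nat.add_sub_cancel] at hrw
      push_cast at hrw
      -- key: (1 + B/(w+1)) * w^B ≤ (w+1)^B
      have hkey : (1 + B / ((w:ℝ)+1)) * (w:ℝ) ^ B ≤ ((w:ℝ)+1) ^ B := by
        have hb : (1 : ℝ) + B * (1/(w:ℝ)) ≤ (1 + 1/(w:ℝ)) ^ B :=
          one_add_mul_self_le_rpow_one_add (le_trans (by norm_num : (-1:ℝ) ≤ 0) (by positivity)) hB
        have hsplit : ((w:ℝ)+1) ^ B = (w:ℝ) ^ B * (1 + 1/(w:ℝ)) ^ B := by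
          rw [← Real.mul_rpow (le_of_lt hwpos) (by positivity : (0:ℝ) ≤ 1 + 1/(w:ℝ))]
          congr 1
          field_simp
        rw [hsplit]
        have h2 : 1 + B / ((w:ℝ)+1) ≤ 1 + B * (1/(w:ℝ)) := by
          have : B / ((w:ℝ)+1) ≤ B / (w:ℝ) :=
            div_le_div_of_nonneg_left (by linarith) hwpos (by linarith)
          rw [mul_one_div]; linarith
        calc (1 + B / ((w:ℝ)+1)) * (w:ℝ) ^ B
            ≤ (1 + B * (1/(w:ℝ))) * (w:ℝ) ^ B := by
              apply mul_le_mul_of_nonneg_right h2 (Real.rpow_nonneg hwpos.le B)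
          _ ≤ (1 + 1/(w:ℝ)) ^ B * (w:ℝ) ^ B := by
              apply mul_le_mul_of_nonneg_right hb (Real.rpow_nonneg hwpos.le B)
          _ = (w:ℝ) ^ B * (1 + 1/(w:ℝ)) ^ B := mul_comm _ _
      have hge : (w:ℝ)+1 ≤ ((w:ℝ)+1) ^ B := by
        calc (w:ℝ)+1 = ((w:ℝ)+1) ^ (1:ℝ) := (Real.rpow_one _).symm
          _ ≤ ((w:ℝ)+1) ^ B := Real.rpow_le_rpow_of_exponent_le (by linarith) hB
      have hfac : (0:ℝ) ≤ 1 + B / ((w:ℝ)+1) := by positivity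
      have hSsucc : S (w+1) = S w + 1/((w:ℝ)+1)^2 := by
        simp [hS, Finset.sum_range_succ]
      have step1 : (1 + B / ((w:ℝ)+1)) * P w
          ≤ ((w:ℝ)+1) ^ B * (Real.exp B * E * S w) := by
        calc (1 + B / ((w:ℝ)+1)) * P w
            ≤ (1 + B / ((w:ℝ)+1)) * (Real.exp B * (w:ℝ) ^ B * E * S w) :=
              mul_le_mul_of_nonneg_left ih hfac
          _ = ((1 + B / ((w:ℝ)+1)) * (w:ℝ) ^ B) * (Real.exp B * E * S w) := by ring
          _ ≤ ((w:ℝ)+1) ^ B * (Real.exp B * E * S w) := by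
              apply mul_le_mul_of_nonneg_right hkey
              exact mul_nonneg (mul_nonneg (Real.exp_pos B).le hE) (hSnn w)
      have step2 : E / ((w:ℝ)+1) ≤ Real.exp B * ((w:ℝ)+1) ^ B * E * (1/((w:ℝ)+1)^2) := by
        rw [div_eq_mul_one_div]
        have h1 : (1:ℝ)/((w:ℝ)+1) ≤ Real.exp B * ((w:ℝ)+1) ^ B * (1/((w:ℝ)+1)^2) := by
          have hA : ((w:ℝ)+1) ≤ Real.exp B * ((w:ℝ)+1) ^ B :=
            calc ((w:ℝ)+1) ≤ ((w:ℝ)+1) ^ B := hge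
              _ ≤ Real.exp B * ((w:ℝ)+1) ^ B :=
                  le_mul_of_one_le_left (Real.rpow_nonneg (by linarith) B) hexp
          rw [mul_one_div, div_le_div_iff₀ (by positivity) (by positivity)]
          nlinarith
        calc E * (1/((w:ℝ)+1)) ≤ E * (Real.exp B * ((w:ℝ)+1) ^ B * (1/((w:ℝ)+1)^2)) :=
              mul_le_mul_of_nonneg_left h1 hE
          _ = Real.exp B * ((w:ℝ)+1) ^ B * E * (1/((w:ℝ)+1)^2) := by ring
      rw [hSsucc]
      push_cast
      calc P (w+1) ≤ (1 + B / ((w:ℝ)+1)) * P w + E / ((w:ℝ)+1) := hrw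
        _ ≤ ((w:ℝ)+1) ^ B * (Real.exp B * E * S w)
            + Real.exp B * ((w:ℝ)+1) ^ B * E * (1/((w:ℝ)+1)^2) := add_le_add step1 step2
        _ = Real.exp B * ((w:ℝ)+1) ^ B * E * (S w + 1/((w:ℝ)+1)^2) := by ring
  intro w hw
  calc P w ≤ Real.exp B * (w:ℝ) ^ B * E * S w := main w hw
    _ ≤ Real.exp B * (w:ℝ) ^ B * E * (Real.pi ^ 2 / 6) := by
        apply mul_le_mul_of_nonneg_left (hSle w)
        have : (0:ℝ) < w := by exact_mod_cast hw
        positivity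
    _ = Real.pi ^ 2 / 6 * Real.exp B * (w:ℝ) ^ B * E := by ring
end

section
/- For every real B ≥ 1 and every integer w ≥ 1, Σ_{s=1}^{w} (1/s) · Π_{j=s}^{w} (1 + B/j) ≤ (π²/6) · e^B · w^B. -/
/-!
Since `1 + x ≤ eˣ`, the product `∏_{j=s}^{w} (1 + B/j)` is at most `exp (B ∑_{j=s}^{w} 1/j)`, and
the harmonic tail is at most `1 + log (w/s)`; so the product is at most `e^B (w/s)^B`. For `B ≥ 1`
the `s`-th summand is then at most `e^B w^B / s²`, and `∑ 1/s² ≤ π²/6`.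
-/

open Finset Real

lemma sum_Icc_inv_le_one_add_log_div {s w : ℕ} (hs : 1 ≤ s) (hsw : s ≤ w) :
    ∑ j ∈ Icc s w, (j : ℝ)⁻¹ ≤ 1 + log (w / s) := by
  have hs₀ : (0 : ℝ) < s := by exact_mod_cast hs
  induction w, hsw using Nat.le_induction with
  | base =>
    rw [Icc_self, sum_singleton, div_self hs₀.ne', log_one, add_zero]
    exact inv_le_one_of_one_le₀ (by exact_mod_cast hs)
  | succ n hsn ih =>
    have hn : (0 : ℝ) < n := hs₀.trans_le (by exact_mod_cast hsn)
    -- `1/(n+1) = 1 - n/(n+1) ≤ log ((n+1)/n)`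
    have hstep : ((n + 1 : ℕ) : ℝ)⁻¹ ≤ log ((n + 1 : ℕ) / s) - log (n / s) := by
      rw [← log_div (by positivity) (by positivity), div_div_div_cancel_right₀ hs₀.ne']
      convert one_sub_inv_le_log_of_pos (x := ((n + 1 : ℕ) : ℝ) / n) (by positivity) using 1
      push_cast
      field_simp
      ring
    rw [sum_Icc_succ_top (by omega)]
    linarith

lemma prod_Icc_one_add_div_le {B : ℝ} (hB : 0 ≤ B) {s w : ℕ} (hs : 1 ≤ s) (hsw : s ≤ w) :
    ∏ j ∈ Icc s w, (1 + B / j) ≤ exp B * ((w : ℝ) / s) ^ B := by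
  have hws : (0 : ℝ) < w / s := div_pos (by exact_mod_cast hs.trans hsw) (by exact_mod_cast hs)
  calc ∏ j ∈ Icc s w, (1 + B / j)
      ≤ exp (∑ j ∈ Icc s w, B / j) := prod_one_add_le_exp_sum _ fun j ↦ by positivity
    _ = exp (B * ∑ j ∈ Icc s w, (j : ℝ)⁻¹) := by simp only [mul_sum, div_eq_mul_inv]
    _ ≤ exp (B * (1 + log (w / s))) := by
        gcongr
        exact sum_Icc_inv_le_one_add_log_div hs hsw
    _ = exp B * ((w : ℝ) / s) ^ B := by rw [rpow_def_of_pos hws, ← exp_add]; ring_nf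

lemma one_div_mul_prod_Icc_one_add_div_le {B : ℝ} (hB : 1 ≤ B) {s w : ℕ} (hs : 1 ≤ s)
    (hsw : s ≤ w) :
    1 / (s : ℝ) * ∏ j ∈ Icc s w, (1 + B / j) ≤ exp B * (w : ℝ) ^ B * (1 / (s : ℝ) ^ 2) := by
  have hs₁ : (1 : ℝ) ≤ s := by exact_mod_cast hs
  have hs_le : (s : ℝ) ≤ (s : ℝ) ^ B := by
    simpa using rpow_le_rpow_of_exponent_le hs₁ hB
  calc 1 / (s : ℝ) * ∏ j ∈ Icc s w, (1 + B / j)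
      ≤ 1 / s * (exp B * ((w : ℝ) / s) ^ B) := by
        gcongr
        exact prod_Icc_one_add_div_le (by linarith) hs hsw
    _ = exp B * (w : ℝ) ^ B / (s * (s : ℝ) ^ B) := by
        rw [div_rpow (by positivity) (by positivity)]
        field_simp
    _ ≤ exp B * (w : ℝ) ^ B / (s * s) := by gcongr
    _ = exp B * (w : ℝ) ^ B * (1 / (s : ℝ) ^ 2) := by ring

lemma sum_Icc_one_div_sq_le_pi_sq_div_six (w : ℕ) :
    ∑ s ∈ Icc 1 w, 1 / (s : ℝ) ^ 2 ≤ π ^ 2 / 6 :=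
  sum_le_hasSum _ (fun _ _ ↦ by positivity) hasSum_zeta_two

theorem stmt9_general (B : ℝ) (hB : 1 ≤ B) (w : ℕ) :
    ∑ s ∈ Finset.Icc 1 w, (1 / (s : ℝ)) * ∏ j ∈ Finset.Icc s w, (1 + B / (j : ℝ))
      ≤ Real.pi ^ 2 / 6 * Real.exp B * (w : ℝ) ^ B := by
  calc ∑ s ∈ Icc 1 w, 1 / (s : ℝ) * ∏ j ∈ Icc s w, (1 + B / j)
      ≤ ∑ s ∈ Icc 1 w, exp B * (w : ℝ) ^ B * (1 / (s : ℝ) ^ 2) := by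
        refine sum_le_sum fun s hs ↦ ?_
        rw [mem_Icc] at hs
        exact one_div_mul_prod_Icc_one_add_div_le hB hs.1 hs.2
    _ = exp B * (w : ℝ) ^ B * ∑ s ∈ Icc 1 w, 1 / (s : ℝ) ^ 2 := (mul_sum ..).symm
    _ ≤ exp B * (w : ℝ) ^ B * (π ^ 2 / 6) := by
        gcongr
        exact sum_Icc_one_div_sq_le_pi_sq_div_six w
    _ = π ^ 2 / 6 * exp B * (w : ℝ) ^ B := by ring

/-- **Product-sum estimate used to unroll the error recursion (proof of Lemma C.7):**
for `B ≥ 1` and `w ≥ 1`, `∑_{s=1}^{w} (1/s) ∏_{j=s}^{w} (1 + B/j) ≤ (π²/6) e^B w^B`. -/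
theorem stmt9 (B : ℝ) (hB : 1 ≤ B) (w : ℕ) (hw : 1 ≤ w) :
    ∑ s ∈ Finset.Icc 1 w, (1 / (s : ℝ)) * ∏ j ∈ Finset.Icc s w, (1 + B / (j : ℝ))
      ≤ Real.pi ^ 2 / 6 * Real.exp B * (w : ℝ) ^ B :=
  stmt9_general B hB w
end

section
/- For all nonzero vectors u, v ∈ ℝ^p, max_{1 ≤ i ≤ p} |u_i/‖u‖ − v_i/‖v‖| ≤ (1 + √p) · (max_{1 ≤ i ≤ p} |u_i − v_i|) / ‖v‖, where ‖·‖ denotes the Euclidean norm. -/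
lemma coord_le_norm {p : ℕ} (u : EuclideanSpace ℝ (Fin p)) (i : Fin p) : |u i| ≤ ‖u‖ := by
  rw [EuclideanSpace.norm_eq]
  have h1 : |u i| = Real.sqrt (‖u i‖ ^ 2) := by
    rw [Real.sqrt_sq_eq_abs]; simp [abs_abs]
  rw [h1]
  apply Real.sqrt_le_sqrt
  exact Finset.single_le_sum (f := fun j => ‖u j‖ ^ 2) (fun j _ => by positivity) (Finset.mem_univ i)

/-- **Sup-norm perturbation bound for Euclidean normalization (Equation C.9).**
For nonzero `u, v ∈ ℝ^p`,
`max_i |u_i/‖u‖ - v_i/‖v‖| ≤ (1 + √p) (max_i |u_i - v_i|) / ‖v‖`. -/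
theorem stmt14 (p : ℕ) (u v : EuclideanSpace ℝ (Fin p)) (hu : u ≠ 0) (hv : v ≠ 0) :
    (⨆ i : Fin p, |u i / ‖u‖ - v i / ‖v‖|)
      ≤ (1 + Real.sqrt p) * (⨆ i : Fin p, |u i - v i|) / ‖v‖ := by
  rcases Nat.eq_zero_or_pos p with hp | hp
  · subst hp; exact absurd (Subsingleton.elim u 0) hu
  have hune : Nonempty (Fin p) := ⟨⟨0, hp⟩⟩
  have hu' : (0:ℝ) < ‖u‖ := norm_pos_iff.mpr hu
  have hv' : (0:ℝ) < ‖v‖ := norm_pos_iff.mpr hv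
  set M := ⨆ i : Fin p, |u i - v i| with hM
  have hbdd : BddAbove (Set.range fun i : Fin p => |u i - v i|) :=
    Set.Finite.bddAbove (Set.finite_range _)
  have hle : ∀ i, |u i - v i| ≤ M := fun i => le_ciSup hbdd i
  have hM0 : 0 ≤ M := le_trans (abs_nonneg _) (hle ⟨0, hp⟩)
  -- ‖u - v‖ ≤ √p * M
  have hnorm : ‖u - v‖ ≤ Real.sqrt p * M := by
    rw [EuclideanSpace.norm_eq]
    have : ∑ i, ‖(u - v) i‖ ^ 2 ≤ (p : ℝ) * M ^ 2 := by
      calc ∑ i, ‖(u - v) i‖ ^ 2 ≤ ∑ _i : Fin p, M ^ 2 := by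
            apply Finset.sum_le_sum
            intro i _
            have : ‖(u - v) i‖ = |u i - v i| := by simp [PiLp.sub_apply]
            rw [this]
            exact pow_le_pow_left₀ (abs_nonneg _) (hle i) 2
        _ = (p : ℝ) * M ^ 2 := by simp [mul_comm]
    calc Real.sqrt (∑ i, ‖(u - v) i‖ ^ 2) ≤ Real.sqrt ((p:ℝ) * M ^ 2) := Real.sqrt_le_sqrt this
      _ = Real.sqrt p * M := by
          rw [Real.sqrt_mul (Nat.cast_nonneg p), Real.sqrt_sq hM0]
  apply ciSup_le
  intro i
  have key : u i / ‖u‖ - v i / ‖v‖ = (u i - v i) / ‖v‖ + u i * (1 / ‖u‖ - 1 / ‖v‖) := by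
    field_simp
    ring
  rw [key]
  have h2 : |u i * (1 / ‖u‖ - 1 / ‖v‖)| ≤ Real.sqrt p * M / ‖v‖ := by
    have e : 1 / ‖u‖ - 1 / ‖v‖ = (‖v‖ - ‖u‖) / (‖u‖ * ‖v‖) := by field_simp
    rw [abs_mul, e, abs_div]
    have h3 : |‖v‖ - ‖u‖| ≤ ‖u - v‖ := by
      rw [abs_sub_comm]
      exact abs_norm_sub_norm_le u v
    have h4 : |‖u‖ * ‖v‖| = ‖u‖ * ‖v‖ := abs_of_pos (by positivity)
    rw [h4]
    calc |u i| * (|‖v‖ - ‖u‖| / (‖u‖ * ‖v‖))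
        ≤ ‖u‖ * (‖u - v‖ / (‖u‖ * ‖v‖)) := by
          apply mul_le_mul (coord_le_norm u i) _ (by positivity) (norm_nonneg u)
          exact div_le_div_of_nonneg_right h3 (by positivity) |>.trans_eq rfl
      _ = ‖u - v‖ / ‖v‖ := by field_simp
      _ ≤ Real.sqrt p * M / ‖v‖ := by gcongr
  calc |(u i - v i) / ‖v‖ + u i * (1 / ‖u‖ - 1 / ‖v‖)|
      ≤ |(u i - v i) / ‖v‖| + |u i * (1 / ‖u‖ - 1 / ‖v‖)| := abs_add_le _ _
    _ ≤ M / ‖v‖ + Real.sqrt p * M / ‖v‖ := by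
        apply add_le_add _ h2
        rw [abs_div, abs_of_pos hv']
        gcongr
        exact hle i
    _ = (1 + Real.sqrt p) * M / ‖v‖ := by ring
end
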